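/- arXiv:2405.11528 — 5 statements merged into one kernel-verified Lean document; each statement's English description precedes it below -/
import Mathlib

section
/- Let 0 = F₋₁C ⊆ F₀C ⊆ F₁C ⊆ ⋯ be an increasing filtration of a chain complex C of ℚ-vector spaces by subcomplexes, and suppose that for every i ≥ 0 and every k ≥ 0 the map H_k(F_iC) → H_k(F_{i+1}C) induced by the inclusion is the zero map. Then the E¹-page of the spectral sequence of the filtered complex is exact and the spectral sequence collapses with E²_{s,t} = 0 for all s,t. Concretely: for every s ≥ 0 and every k, the three-term sequence H_{k+1}(F_{s+1}C/F_sC) → H_k(F_sC/F_{s−1}C) → H_{k−1}(F_{s−1}C/F_{s−2}C) (with the convention F_jC = 0 for j < 0) is exact at the middle term, where each map is the composite of the connecting homomorphism δ of the short exact sequence of complexes 0 → F_sC → F_{s+1}C → F_{s+1}C/F_sC → 0 with the map on homology induced by the quotient projection F_sC → F_sC/F_{s−1}C. -/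
open CategoryTheory CategoryTheory.Limits

noncomputable section

/-- The short exact sequence of chain complexes `0 → F i → F (i+1) → F (i+1)/F i → 0`,
where the quotient is taken as the cokernel of the inclusion. -/
def filtrationSC (F : ℤ → ChainComplex (ModuleCat ℚ) ℤ)
    (ι : ∀ i : ℤ, F i ⟶ F (i + 1)) (i : ℤ) :
    ShortComplex (ChainComplex (ModuleCat ℚ) ℤ) :=
  ShortComplex.mk (ι i) (cokernel.π (ι i)) (cokernel.condition _)

/-- The map `H_i(F (s+1)/F s) → H_j(F s/F (s−1))` (for `j + 1 = i`) on the `E¹`-page of the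
spectral sequence of the filtration: the connecting homomorphism `δ` of the short exact
sequence `0 → F s → F (s+1) → F (s+1)/F s → 0` composed with the map on homology induced by
the quotient projection `F s → F s/F (s−1)`. -/
def grConnecting (F : ℤ → ChainComplex (ModuleCat ℚ) ℤ)
    (ι : ∀ i : ℤ, F i ⟶ F (i + 1))
    (hSES : ∀ i : ℤ, (filtrationSC F ι i).ShortExact)
    (s i j : ℤ) (hij : j + 1 = i) :
    ((cokernel (ι s)).homology i) ⟶ ((cokernel (ι (s - 1))).homology j) :=
  (hSES s).δ i j hij ≫
    HomologicalComplex.homologyMap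
      (eqToHom (congrArg F (by omega : s = s - 1 + 1)) ≫ cokernel.π (ι (s - 1))) j

/-!
Since `F j = 0` for `j < 0` and the complexes vanish in negative degrees, the hypothesis makes
every map `H(ι i)` zero. In the long exact sequence of `0 → F s → F (s+1) → F (s+1)/F s → 0`
this makes `δ` surjective and `H(F (s+1)) → H(F (s+1)/F s)` injective. The composite of two
`E¹`-differentials contains `H(F s) → H(F s/F (s-1)) → H(F (s-1))`, which is zero. If the
second differential kills `y`, injectivity gives `δ y = 0`, so `y` lifts to `H(F s)`, and by
surjectivity that lift is `δ x`.
-/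

namespace CategoryTheory.ShortComplex.ShortExact

variable {C : Type*} [Category C] [Abelian C] {J : Type*} {c : ComplexShape J}
  {S : ShortComplex (HomologicalComplex C c)} (hS : S.ShortExact)
include hS

lemma mono_homologyMap_g_of_homologyMap_f_eq_zero (i : J)
    (h : HomologicalComplex.homologyMap S.f i = 0) :
    Mono (HomologicalComplex.homologyMap S.g i) :=
  (hS.homology_exact₂ i).mono_g h

lemma epi_δ_of_homologyMap_f_eq_zero (i j : J) (hij : c.Rel i j)
    (h : HomologicalComplex.homologyMap S.f j = 0) :
    Epi (hS.δ i j hij) :=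
  (hS.homology_exact₁ i j hij).epi_f h

end CategoryTheory.ShortComplex.ShortExact

lemma HomologicalComplex.homologyMap_eq_zero_of_isZero_X {C : Type*} [Category C] [Abelian C]
    {J : Type*} {c : ComplexShape J} {K L : HomologicalComplex C c} (f : K ⟶ L) (i : J)
    (h : IsZero (K.X i)) : homologyMap f i = 0 :=
  (ShortComplex.isZero_homology_of_isZero_X₂ (K.sc i) h).eq_of_src _ _

section Filtration

variable (F : ℤ → ChainComplex (ModuleCat ℚ) ℤ) (ι : ∀ i : ℤ, F i ⟶ F (i + 1))
  (hSES : ∀ i : ℤ, (filtrationSC F ι i).ShortExact)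

lemma homologyMap_filtration_eq_zero (hFneg : ∀ i : ℤ, i < 0 → IsZero (F i))
    (hdegneg : ∀ (i n : ℤ), n < 0 → IsZero ((F i).X n))
    (hvanish : ∀ i : ℤ, 0 ≤ i → ∀ k : ℤ, 0 ≤ k →
      HomologicalComplex.homologyMap (ι i) k = 0)
    (i n : ℤ) : HomologicalComplex.homologyMap (ι i) n = 0 := by
  rcases lt_or_ge n 0 with hn | hn
  · exact HomologicalComplex.homologyMap_eq_zero_of_isZero_X _ _ (hdegneg i n hn)
  rcases lt_or_ge i 0 with hi | hi
  · rw [(hFneg i hi).eq_of_src (ι i) 0, HomologicalComplex.homologyMap_zero]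
  · exact hvanish i hi n hn

/- `grConnecting` feeds `δ` a proof of `j + 1 = i`, which is only defeq to
`(ComplexShape.down ℤ).Rel i j`; the resulting terms are ill-typed at reducible transparency and
block `rw`, so we pass to the well-typed form first. -/
lemma grConnecting_apply (s i j : ℤ) (hij : j + 1 = i) (x : (cokernel (ι s)).homology i) :
    grConnecting F ι hSES s i j hij x =
      HomologicalComplex.homologyMap (cokernel.π (ι (s - 1))) j
        (HomologicalComplex.homologyMap (eqToHom (congrArg F (by omega : s = s - 1 + 1))) j
          ((hSES s).δ i j (ComplexShape.down_mk i j hij) x)) := by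
  simp only [grConnecting, HomologicalComplex.homologyMap_comp]
  rfl

lemma grConnecting_grConnecting_apply (s i j l : ℤ) (hij : j + 1 = i) (hjl : l + 1 = j)
    (x : (cokernel (ι s)).homology i) :
    grConnecting F ι hSES (s - 1) j l hjl (grConnecting F ι hSES s i j hij x) = 0 := by
  have h (z : (F (s - 1 + 1)).homology j) :
      (hSES (s - 1)).δ j l (ComplexShape.down_mk j l hjl)
        (HomologicalComplex.homologyMap (cokernel.π (ι (s - 1))) j z) =
        (0 : (F (s - 1)).homology l) :=
    ConcreteCategory.congr_hom ((hSES (s - 1)).comp_δ j l _) z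
  rw [grConnecting_apply, grConnecting_apply, h, map_zero, map_zero]

lemma exists_grConnecting_eq_of_grConnecting_eq_zero (s i j l : ℤ) (hij : j + 1 = i)
    (hjl : l + 1 = j) (hs : HomologicalComplex.homologyMap (ι s) j = 0)
    (hs' : HomologicalComplex.homologyMap (ι (s - 1 - 1)) l = 0)
    (y : (cokernel (ι (s - 1))).homology j) (hy : grConnecting F ι hSES (s - 1) j l hjl y = 0) :
    ∃ x, grConnecting F ι hSES s i j hij x = y := by
  have hπ : Mono (HomologicalComplex.homologyMap (cokernel.π (ι (s - 1 - 1))) l) :=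
    (hSES (s - 1 - 1)).mono_homologyMap_g_of_homologyMap_f_eq_zero l hs'
  have hδ : (hSES (s - 1)).δ j l (ComplexShape.down_mk j l hjl) y =
      (0 : (F (s - 1)).homology l) := by
    rw [grConnecting_apply] at hy
    apply (ConcreteCategory.bijective_of_isIso (HomologicalComplex.homologyMap
      (eqToHom (congrArg F (by omega : s - 1 = s - 1 - 1 + 1))) l)).1
    apply (ModuleCat.mono_iff_injective _).1 hπ
    rw [hy, map_zero, map_zero]
  obtain ⟨u', rfl⟩ :=
    (ShortComplex.moduleCat_exact_iff _).1 ((hSES (s - 1)).homology_exact₃ j l _) y hδ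
  obtain ⟨u, rfl⟩ := (ConcreteCategory.bijective_of_isIso (HomologicalComplex.homologyMap
      (eqToHom (congrArg F (by omega : s = s - 1 + 1))) j)).2 u'
  have hδ_epi := (hSES s).epi_δ_of_homologyMap_f_eq_zero i j (ComplexShape.down_mk i j hij) hs
  obtain ⟨x, rfl⟩ := (ModuleCat.epi_iff_surjective _).1 hδ_epi u
  exact ⟨x, grConnecting_apply F ι hSES s i j hij x⟩

end Filtration

theorem proposition_2_8
    (F : ℤ → ChainComplex (ModuleCat ℚ) ℤ)
    (ι : ∀ i : ℤ, F i ⟶ F (i + 1))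
    -- `F j = 0` for `j < 0`
    (hFneg : ∀ i : ℤ, i < 0 → IsZero (F i))
    -- the complexes are supported in non-negative degrees
    (hdegneg : ∀ (i n : ℤ), n < 0 → IsZero ((F i).X n))
    (hSES : ∀ i : ℤ, (filtrationSC F ι i).ShortExact)
    -- every map `H_k(F_iC) → H_k(F_{i+1}C)` is zero
    (hvanish : ∀ i : ℤ, 0 ≤ i → ∀ k : ℤ, 0 ≤ k →
      HomologicalComplex.homologyMap (ι i) k = 0)
    (s : ℤ) (k : ℤ) :
    (∀ x : (cokernel (ι s)).homology (k + 1),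
      grConnecting F ι hSES (s - 1) k (k - 1) (by omega)
        (grConnecting F ι hSES s (k + 1) k rfl x) = 0) ∧
    (∀ y : (cokernel (ι (s - 1))).homology k,
      grConnecting F ι hSES (s - 1) k (k - 1) (by omega) y = 0 →
      ∃ x : (cokernel (ι s)).homology (k + 1),
        grConnecting F ι hSES s (k + 1) k rfl x = y) := by
  have hzero := homologyMap_filtration_eq_zero F ι hFneg hdegneg hvanish
  exact ⟨grConnecting_grConnecting_apply F ι hSES s (k + 1) k (k - 1) rfl (by omega),
    exists_grConnecting_eq_of_grConnecting_eq_zero F ι hSES s (k + 1) k (k - 1) rfl (by omega)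
      (hzero s k) (hzero (s - 1 - 1) (k - 1))⟩

end
end

section
/- Let Φ be a natural transformation from the geometric realization functor |·| : sSet → Top (from simplicial sets to topological spaces) to itself, i.e., a natural family of continuous maps Φ_X : |X| → |X| for all simplicial sets X. Then Φ is naturally homotopic to the identity: there exists, for every simplicial set X, a homotopy H_X : |X| × [0,1] → |X| with H_X(·, 0) = Φ_X and H_X(·, 1) = id_{|X|}, and these homotopies are natural in X in the sense that for every map of simplicial sets f : X → Y and every s ∈ [0,1], one has |f| ∘ H_X(·, s) = H_Y(·, s) ∘ |f|. -/
/-!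
The geometric realization is the left Kan extension of the topological simplices
`n ↦ Δⁿ` along the Yoneda embedding, so a natural transformation out of it is determined by, and
can be constructed from, its restriction to the simplices. On the simplices, `Φ` restricts to a
natural family of self-maps `γₙ : Δⁿ → Δⁿ`, and the straight-line homotopy
`(x, t) ↦ (1 - t) γₙ(x) + t x` is natural in `n` because the simplicial operators act by affine
maps. Viewing a homotopy as a natural map `|X| → C(I, |X|)` into the path space, it extends
from the simplices to all simplicial sets, and its ends agree with `Φ` and `𝟙` by uniqueness.
-/

open CategoryTheory unitInterval

namespace stdSimplex

variable {X Y : Type*} [Fintype X] [Fintype Y]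

def lineMap (a b : stdSimplex ℝ X) (t : I) : stdSimplex ℝ X :=
  ⟨AffineMap.lineMap (a : X → ℝ) b (t : ℝ), (convex_stdSimplex ℝ X).lineMap_mem a.2 b.2 t.2⟩

@[simp] lemma lineMap_zero (a b : stdSimplex ℝ X) : lineMap a b 0 = a :=
  Subtype.ext (AffineMap.lineMap_apply_zero _ _)

@[simp] lemma lineMap_one (a b : stdSimplex ℝ X) : lineMap a b 1 = b :=
  Subtype.ext (AffineMap.lineMap_apply_one _ _)

lemma map_lineMap (f : X → Y) (a b : stdSimplex ℝ X) (t : I) :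
    map f (lineMap a b t) = lineMap (map f a) (map f b) t :=
  Subtype.ext ((FunOnFinite.linearMap ℝ ℝ f).toAffineMap.apply_lineMap _ _ _)

@[fun_prop]
lemma continuous_lineMap {Z : Type*} [TopologicalSpace Z] {a b : Z → stdSimplex ℝ X} {t : Z → I}
    (ha : Continuous a) (hb : Continuous b) (ht : Continuous t) :
    Continuous fun z => lineMap (a z) (b z) (t z) :=
  ((continuous_subtype_val.comp ha).lineMap (continuous_subtype_val.comp hb)
    (continuous_subtype_val.comp ht)).subtype_mk _

end stdSimplex

namespace TopCat

universe u

def pathSpace : TopCat.{u} ⥤ TopCat.{u} where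
  obj X := of C(I, X)
  map f := ofHom ⟨f.hom.comp, ContinuousMap.continuous_postcomp _⟩

def pathSpaceEval (t : I) : pathSpace.{u} ⟶ 𝟭 TopCat.{u} where
  app X := ofHom ⟨fun γ => γ t, continuous_eval_const t⟩

open Functor

variable {C : Type*} [Category C] {F G : C ⥤ TopCat.{u}}

/-- A natural homotopy is encoded as a natural map into path spaces rather than out of `F c × I`,
so that it is a morphism out of `F` and extends along Kan extensions. -/
def NatHomotopic (φ₀ φ₁ : F ⟶ G) : Prop :=
  ∃ h : F ⟶ G ⋙ pathSpace,
    h ≫ whiskerLeft G (pathSpaceEval 0) = φ₀ ∧ h ≫ whiskerLeft G (pathSpaceEval 1) = φ₁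

lemma NatHomotopic.comp_right {φ₀ φ₁ : F ⟶ G} (h : NatHomotopic φ₀ φ₁) {G' : C ⥤ TopCat.{u}}
    (ψ : G ⟶ G') : NatHomotopic (φ₀ ≫ ψ) (φ₁ ≫ ψ) := by
  obtain ⟨h, h₀, h₁⟩ := h
  refine ⟨h ≫ whiskerRight ψ pathSpace, ?_, ?_⟩
  · rw [← h₀]; ext; rfl
  · rw [← h₁]; ext; rfl

lemma NatHomotopic.of_isLeftKanExtension {D : Type*} [Category D] {L : C ⥤ D}
    {F' G' : D ⥤ TopCat.{u}} (α : F ⟶ L ⋙ F') [F'.IsLeftKanExtension α] {φ₀ φ₁ : F' ⟶ G'}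
    (h : NatHomotopic (α ≫ whiskerLeft L φ₀) (α ≫ whiskerLeft L φ₁)) : NatHomotopic φ₀ φ₁ := by
  obtain ⟨h, h₀, h₁⟩ := h
  let H := F'.descOfIsLeftKanExtension α (G' ⋙ pathSpace) h
  have restrict_eval (t : I) : α ≫ whiskerLeft L (H ≫ whiskerLeft G' (pathSpaceEval t)) =
      h ≫ whiskerLeft (L ⋙ G') (pathSpaceEval t) := by
    rw [whiskerLeft_comp, ← Category.assoc, descOfIsLeftKanExtension_fac]
    rfl
  exact ⟨H, F'.hom_ext_of_isLeftKanExtension α _ _ (by rw [restrict_eval, h₀]),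
    F'.hom_ext_of_isLeftKanExtension α _ _ (by rw [restrict_eval, h₁])⟩

end TopCat

namespace SimplexCategory

open TopCat Functor

universe u

noncomputable def straightLineHomotopy {G : SimplexCategory ⥤ TopCat.{u}} (γ₀ γ₁ : G ⟶ toTop.{u}) :
    G ⟶ toTop ⋙ pathSpace where
  app n := ofHom (ContinuousMap.curry
    ⟨fun p => ULift.up (stdSimplex.lineMap (γ₀.app n p.1).down (γ₁.app n p.1).down p.2),
      by fun_prop⟩)
  naturality n m f := by
    ext x : 2
    refine ContinuousMap.ext fun t => congrArg ULift.up ?_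
    change stdSimplex.lineMap (γ₀.app m (G.map f x)).down (γ₁.app m (G.map f x)).down t =
      stdSimplex.map f (stdSimplex.lineMap (γ₀.app n x).down (γ₁.app n x).down t)
    rw [γ₀.naturality_apply, γ₁.naturality_apply]
    exact (stdSimplex.map_lineMap _ _ _ _).symm

lemma natHomotopic_toTop {G : SimplexCategory ⥤ TopCat.{u}} (γ₀ γ₁ : G ⟶ toTop.{u}) :
    NatHomotopic γ₀ γ₁ := by
  refine ⟨straightLineHomotopy γ₀ γ₁, ?_, ?_⟩
  · ext n x : 3
    exact congrArg ULift.up (stdSimplex.lineMap_zero _ _)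
  · ext n x : 3
    exact congrArg ULift.up (stdSimplex.lineMap_one _ _)

end SimplexCategory

namespace SSet

open TopCat Functor

universe u

lemma toTop_endo_natHomotopic_id (Φ : toTop.{u} ⟶ toTop.{u}) : NatHomotopic Φ (𝟙 toTop) := by
  apply NatHomotopic.of_isLeftKanExtension toTopSimplex.inv
  have h := (SimplexCategory.natHomotopic_toTop
    (toTopSimplex.inv ≫ whiskerLeft stdSimplex Φ ≫ toTopSimplex.hom)
    (toTopSimplex.inv ≫ toTopSimplex.hom)).comp_right toTopSimplex.inv
  convert h using 1 <;> cat_disch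

end SSet

/-- Any natural transformation `Φ` from the geometric realization functor `SSet ⥤ Top` to
itself is naturally homotopic to the identity: for each simplicial set `X` there is a
homotopy `H X : |X| × [0,1] → |X|` from `Φ.app X` to the identity, and these homotopies are
natural in `X`. -/
theorem natural_transformation_of_realization_homotopic_to_id
    (Φ : SSet.toTop ⟶ SSet.toTop) :
    ∃ H : ∀ X : SSet, C(↑(SSet.toTop.obj X) × I, ↑(SSet.toTop.obj X)),
      (∀ (X : SSet) (x : ↑(SSet.toTop.obj X)), H X (x, 0) = Φ.app X x) ∧
      (∀ (X : SSet) (x : ↑(SSet.toTop.obj X)), H X (x, 1) = x) ∧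
      (∀ {X Y : SSet} (f : X ⟶ Y) (x : ↑(SSet.toTop.obj X)) (s : I),
        SSet.toTop.map f (H X (x, s)) = H Y (SSet.toTop.map f x, s)) := by
  obtain ⟨h, h₀, h₁⟩ := SSet.toTop_endo_natHomotopic_id Φ
  refine ⟨fun X => (h.app X).hom.uncurry, fun X x => ?_, fun X x => ?_, fun f x s => ?_⟩
  · exact ConcreteCategory.congr_hom (NatTrans.congr_app h₀ X) x
  · exact ConcreteCategory.congr_hom (NatTrans.congr_app h₁ X) x
  · exact (ContinuousMap.congr_fun (h.naturality_apply f x) s).symm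
end

section
/- A positive integer n can be written as a sum of a nonempty set of distinct integers, each of which is at least 5 and congruent to 1 modulo 4, if and only if n belongs to the set {5, 9, 13, 14, 17, 18, 21, 22, 25, 26, 27, 29, 30, 31, 33, 34, 35, 37, 38, 39} or n ≥ 41. That is: (∃ S ⊆ ℕ finite nonempty with all elements m ∈ S satisfying m ≥ 5 and m ≡ 1 (mod 4), and Σ_{m∈S} m = n) ↔ (n ∈ {5,9,13,14,17,18,21,22,25,26,27,29,30,31,33,34,35,37,38,39} ∨ n ≥ 41). -/
/-- Sum of distinct naturals is at least `k(k-1)/2` (doubled form). -/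
lemma min_sum_distinct (T : Finset ℕ) : T.card * (T.card - 1) ≤ 2 * ∑ i ∈ T, i := by
  induction T using Finset.strongInduction with
  | _ T ih =>
    rcases T.eq_empty_or_nonempty with rfl | hT
    · simp
    · obtain ⟨M, hM, hmax⟩ := T.exists_max_image id hT
      have hsub : T ⊆ Finset.range (M + 1) := fun x hx =>
        Finset.mem_range.mpr (Nat.lt_succ_of_le (hmax x hx))
      have hcard : T.card ≤ M + 1 := by
        simpa using Finset.card_le_card hsub
      have h1 := ih (T.erase M) (Finset.erase_ssubset hM)
      have hcard' : (T.erase M).card = T.card - 1 := Finset.card_erase_of_mem hM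
      have hsum : ∑ i ∈ T, i = M + ∑ i ∈ T.erase M, i :=
        (Finset.add_sum_erase T id hM).symm
      have hpos : 1 ≤ T.card := Finset.card_pos.mpr hT
      have key : T.card * (T.card - 1) = (T.card - 1) * (T.card - 1 - 1) + 2 * (T.card - 1) := by
        rcases T.card with _ | _ | k <;> simp [Nat.succ_sub_one] <;> ring
      rw [hcard'] at h1
      rw [hsum]
      omega

lemma sum_mod_four (S : Finset ℕ) (h : ∀ m ∈ S, 5 ≤ m ∧ m % 4 = 1) :
    (∑ m ∈ S, m) % 4 = S.card % 4 := by
  rw [Finset.sum_nat_mod]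
  have : ∑ m ∈ S, m % 4 = ∑ m ∈ S, 1 := Finset.sum_congr rfl fun m hm => (h m hm).2
  rw [this, Finset.sum_const, smul_eq_mul, mul_one]

lemma min_sum_S (S : Finset ℕ) (h : ∀ m ∈ S, 5 ≤ m ∧ m % 4 = 1) :
    S.card * (2 * S.card + 3) ≤ ∑ m ∈ S, m := by
  set T := S.image (fun m => (m - 5) / 4) with hT
  have hinj : Set.InjOn (fun m => (m - 5) / 4) S := by
    intro a ha b hb hab
    have h1 := h a ha; have h2 := h b hb
    simp only at hab
    omega
  have hcard : T.card = S.card := Finset.card_image_of_injOn hinj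
  have hsum : ∑ m ∈ S, m = ∑ i ∈ T, (4 * i + 5) := by
    rw [hT, Finset.sum_image hinj]
    refine Finset.sum_congr rfl fun m hm => ?_
    have := h m hm
    omega
  have h2 := min_sum_distinct T
  rw [hsum, Finset.sum_add_distrib, ← Finset.mul_sum, Finset.sum_const, smul_eq_mul, hcard]
  rw [hcard] at h2
  have key : S.card * (2 * S.card + 3) = 2 * (S.card * (S.card - 1)) + 5 * S.card := by
    rcases S.card with _ | k <;> simp [Nat.succ_sub_one] <;> ring
  omega

/-- A positive integer `n` is a sum of a nonempty set of distinct integers, each at least `5`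
and congruent to `1` mod `4`, if and only if `n` lies in the indicated finite set or `n ≥ 41`. -/
theorem sum_of_distinct_one_mod_four_iff (n : ℕ) (hn : 0 < n) :
    (∃ S : Finset ℕ, S.Nonempty ∧ (∀ m ∈ S, 5 ≤ m ∧ m % 4 = 1) ∧ ∑ m ∈ S, m = n) ↔
      (n ∈ ({5, 9, 13, 14, 17, 18, 21, 22, 25, 26, 27, 29, 30, 31, 33, 34, 35, 37, 38, 39} :
          Finset ℕ) ∨ 41 ≤ n) := by
  constructor
  · rintro ⟨S, hne, hprop, rfl⟩
    by_cases h41 : 41 ≤ ∑ m ∈ S, m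
    · exact Or.inr h41
    left
    have hmod := sum_mod_four S hprop
    have hmin := min_sum_S S hprop
    have hk : 1 ≤ S.card := Finset.card_pos.mpr hne
    have hk3 : S.card ≤ 3 := by nlinarith
    set n := ∑ m ∈ S, m with hn'
    have hn5 : 5 ≤ n := by nlinarith
    have hn40 : n ≤ 40 := by omega
    have hc : S.card = 1 ∨ S.card = 2 ∨ S.card = 3 := by omega
    rcases hc with hc | hc | hc <;> rw [hc] at hmod hmin <;>
      interval_cases n <;> first | decide | omega
  · intro h
    rcases h with h | h
    · fin_cases h
      · exact ⟨{5}, by decide, by decide, by decide⟩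
      · exact ⟨{9}, by decide, by decide, by decide⟩
      · exact ⟨{13}, by decide, by decide, by decide⟩
      · exact ⟨{5, 9}, by decide, by decide, by decide⟩
      · exact ⟨{17}, by decide, by decide, by decide⟩
      · exact ⟨{5, 13}, by decide, by decide, by decide⟩
      · exact ⟨{21}, by decide, by decide, by decide⟩
      · exact ⟨{5, 17}, by decide, by decide, by decide⟩
      · exact ⟨{25}, by decide, by decide, by decide⟩
      · exact ⟨{5, 21}, by decide, by decide, by decide⟩
      · exact ⟨{5, 9, 13}, by decide, by decide, by decide⟩
      · exact ⟨{29}, by decide, by decide, by decide⟩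
      · exact ⟨{5, 25}, by decide, by decide, by decide⟩
      · exact ⟨{5, 9, 17}, by decide, by decide, by decide⟩
      · exact ⟨{33}, by decide, by decide, by decide⟩
      · exact ⟨{5, 29}, by decide, by decide, by decide⟩
      · exact ⟨{5, 9, 21}, by decide, by decide, by decide⟩
      · exact ⟨{37}, by decide, by decide, by decide⟩
      · exact ⟨{5, 33}, by decide, by decide, by decide⟩
      · exact ⟨{5, 9, 25}, by decide, by decide, by decide⟩
    · -- n ≥ 41
      have h4 : n % 4 = 0 ∨ n % 4 = 1 ∨ n % 4 = 2 ∨ n % 4 = 3 := by omega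
      rcases h4 with h4 | h4 | h4 | h4
      · refine ⟨{5, 9, 13, n - 27}, ⟨5, by simp⟩, ?_, ?_⟩
        · intro m hm
          simp only [Finset.mem_insert, Finset.mem_singleton] at hm
          rcases hm with rfl | rfl | rfl | rfl <;> omega
        · rw [Finset.sum_insert (by simp only [Finset.mem_insert, Finset.mem_singleton]; omega), Finset.sum_insert (by simp only [Finset.mem_insert, Finset.mem_singleton]; omega),
            Finset.sum_insert (by simp only [Finset.mem_insert, Finset.mem_singleton]; omega), Finset.sum_singleton]
          omega
      · refine ⟨{n}, ⟨n, by simp⟩, ?_, by simp⟩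
        intro m hm
        simp only [Finset.mem_singleton] at hm
        omega
      · refine ⟨{5, n - 5}, ⟨5, by simp⟩, ?_, ?_⟩
        · intro m hm
          simp only [Finset.mem_insert, Finset.mem_singleton] at hm
          rcases hm with rfl | rfl <;> omega
        · rw [Finset.sum_insert (by simp only [Finset.mem_insert, Finset.mem_singleton]; omega), Finset.sum_singleton]
          omega
      · refine ⟨{5, 9, n - 14}, ⟨5, by simp⟩, ?_, ?_⟩
        · intro m hm
          simp only [Finset.mem_insert, Finset.mem_singleton] at hm
          rcases hm with rfl | rfl | rfl <;> omega
        · rw [Finset.sum_insert (by simp only [Finset.mem_insert, Finset.mem_singleton]; omega), Finset.sum_insert (by simp only [Finset.mem_insert, Finset.mem_singleton]; omega),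
            Finset.sum_singleton]
          omega
end

section
/- For a nonempty finite set S of positive integers, define its genus γ(S) = 2·max(S) + 1 and its sign ε(S) = (−1)^{|S|+1}. For every natural number g, the sum over all finite sequences (S₁, …, S_r), r ≥ 0, of nonempty finite sets of positive integers satisfying γ(S₁) + ⋯ + γ(S_r) = g, of the product ε(S₁)⋯ε(S_r), equals 1 if 3 divides g, and equals 0 otherwise. (There are only finitely many such sequences for each g, since each γ(S_j) ≥ 3 and max(S_j) ≤ g.) -/
/-!
Toggling the element `1` in the first entry different from `{1}` is an involution on the
admissible lists of genus `g`: it keeps every entry admissible, keeps the genus of each entry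
(an entry `S ≠ {1}` has `max S ≥ 2`) and changes the sign of exactly one entry. Hence all
contributions cancel except those of the lists with no entry different from `{1}`; the only
such list is `[{1}, …, {1}]`, which has sign `1` and genus `3 · length`.
-/

open Finset

lemma List.finite_length_le_forall_mem {α : Type*} {s : Set α} (hs : s.Finite) (n : ℕ) :
    {l : List α | l.length ≤ n ∧ ∀ x ∈ l, x ∈ s}.Finite := by
  have := hs.to_subtype
  refine ((List.finite_length_le s n).image (List.map Subtype.val)).subset ?_
  rintro l ⟨hlen, hmem⟩
  exact ⟨l.attach.map fun x => ⟨x.1, hmem _ x.2⟩, by simpa using hlen, by simp⟩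

section ModifyFirstNe

variable {α : Type*} [DecidableEq α] (a : α) (f : α → α)

def modifyFirstNe : List α → List α
  | [] => []
  | x :: l => if x = a then x :: modifyFirstNe l else f x :: l

variable {a f}

@[simp]
lemma modifyFirstNe_cons_self (l : List α) :
    modifyFirstNe a f (a :: l) = a :: modifyFirstNe a f l := by
  simp [modifyFirstNe]

@[simp]
lemma modifyFirstNe_cons_of_ne {x : α} (hx : x ≠ a) (l : List α) :
    modifyFirstNe a f (x :: l) = f x :: l := by
  simp [modifyFirstNe, hx]

lemma modifyFirstNe_replicate (n : ℕ) :
    modifyFirstNe a f (List.replicate n a) = List.replicate n a := by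
  induction n with
  | zero => rfl
  | succ n ih => rw [List.replicate_succ, modifyFirstNe_cons_self, ih]

lemma forall_mem_modifyFirstNe {p : α → Prop} (hf : ∀ x, p x → x ≠ a → p (f x))
    {l : List α} (hl : ∀ x ∈ l, p x) : ∀ y ∈ modifyFirstNe a f l, p y := by
  induction l with
  | nil => simp [modifyFirstNe]
  | cons x l ih =>
    rw [List.forall_mem_cons] at hl
    by_cases hx : x = a
    · rw [hx, modifyFirstNe_cons_self, List.forall_mem_cons]
      exact ⟨hx ▸ hl.1, ih hl.2⟩
    · rw [modifyFirstNe_cons_of_ne hx, List.forall_mem_cons]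
      exact ⟨hf x hl.1 hx, hl.2⟩

lemma map_modifyFirstNe {β : Type*} (w : α → β) {l : List α}
    (hl : ∀ x ∈ l, x ≠ a → w (f x) = w x) : (modifyFirstNe a f l).map w = l.map w := by
  induction l with
  | nil => rfl
  | cons x l ih =>
    rw [List.forall_mem_cons] at hl
    by_cases hx : x = a
    · rw [hx, modifyFirstNe_cons_self, List.map_cons, List.map_cons, ih (hx ▸ hl.2)]
    · rw [modifyFirstNe_cons_of_ne hx, List.map_cons, List.map_cons, hl.1 hx]

lemma modifyFirstNe_modifyFirstNe (hf : Function.Involutive f) {l : List α}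
    (hl : ∀ x ∈ l, x ≠ a → f x ≠ a) : modifyFirstNe a f (modifyFirstNe a f l) = l := by
  induction l with
  | nil => rfl
  | cons x l ih =>
    rw [List.forall_mem_cons] at hl
    by_cases hx : x = a
    · rw [hx, modifyFirstNe_cons_self, modifyFirstNe_cons_self, ih (hx ▸ hl.2)]
    · rw [modifyFirstNe_cons_of_ne hx, modifyFirstNe_cons_of_ne (hl.1 hx), hf x]

lemma prod_map_modifyFirstNe {M : Type*} [Monoid M] [HasDistribNeg M] {w : α → M}
    (hw : ∀ x, w (f x) = -w x) {l : List α} (hl : ∃ x ∈ l, x ≠ a) :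
    ((modifyFirstNe a f l).map w).prod = -(l.map w).prod := by
  induction l with
  | nil => simp at hl
  | cons x l ih =>
    by_cases hx : x = a
    · have hl' : ∃ y ∈ l, y ≠ a := by simpa [hx] using hl
      rw [hx, modifyFirstNe_cons_self, List.map_cons, List.prod_cons, ih hl', mul_neg]
      rfl
    · rw [modifyFirstNe_cons_of_ne hx, List.map_cons, List.map_cons, List.prod_cons,
        List.prod_cons, hw, neg_mul]

end ModifyFirstNe

def genus (S : Finset ℕ) : ℕ := 2 * S.sup id + 1

def sgn (S : Finset ℕ) : ℤ := (-1) ^ (S.card + 1)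

def Admissible (S : Finset ℕ) : Prop := S.Nonempty ∧ ∀ m ∈ S, 0 < m

def admissibleLists (g : ℕ) : Set (List (Finset ℕ)) :=
  {l | (∀ S ∈ l, Admissible S) ∧ (l.map genus).sum = g}

def toggleOne (S : Finset ℕ) : Finset ℕ :=
  if 1 ∈ S then S.erase 1 else insert 1 S

lemma toggleOne_involutive : Function.Involutive toggleOne := by
  intro S
  by_cases h : 1 ∈ S <;> simp [toggleOne, h]

lemma pos_of_mem_toggleOne {S : Finset ℕ} (hS : ∀ m ∈ S, 0 < m) :
    ∀ m ∈ toggleOne S, 0 < m := by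
  intro m hm
  unfold toggleOne at hm
  split_ifs at hm
  · exact hS m (mem_of_mem_erase hm)
  · rcases mem_insert.mp hm with rfl | hm
    · exact one_pos
    · exact hS m hm

lemma sup_toggleOne {S : Finset ℕ} (h : 2 ≤ S.sup id) : (toggleOne S).sup id = S.sup id := by
  unfold toggleOne
  split_ifs with h1
  · conv at h => rw [← insert_erase h1, sup_insert]
    conv_rhs => rw [← insert_erase h1, sup_insert]
    simp only [id] at h ⊢
    omega
  · rw [sup_insert]
    simp only [id]
    omega

lemma two_le_sup_iff_admissible {S : Finset ℕ} (hS : ∀ m ∈ S, 0 < m) :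
    2 ≤ S.sup id ↔ Admissible S ∧ S ≠ {1} := by
  refine ⟨fun h => ⟨⟨?_, hS⟩, ?_⟩, fun ⟨⟨hne, _⟩, h1⟩ => ?_⟩
  · rw [nonempty_iff_ne_empty]
    rintro rfl
    simp at h
  · rintro rfl
    simp at h
  · by_contra! h
    refine h1 (hne.subset_singleton_iff.mp fun m hm => mem_singleton.mpr ?_)
    have := le_sup (f := id) hm
    have := hS m hm
    simp only [id] at *
    omega

lemma admissible_toggleOne {S : Finset ℕ} (hS : Admissible S) (h1 : S ≠ {1}) :
    Admissible (toggleOne S) ∧ toggleOne S ≠ {1} := by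
  have h2 := (two_le_sup_iff_admissible hS.2).2 ⟨hS, h1⟩
  exact (two_le_sup_iff_admissible (pos_of_mem_toggleOne hS.2)).1 (sup_toggleOne h2 ▸ h2)

lemma genus_toggleOne {S : Finset ℕ} (hS : Admissible S) (h1 : S ≠ {1}) :
    genus (toggleOne S) = genus S := by
  rw [genus, genus, sup_toggleOne ((two_le_sup_iff_admissible hS.2).2 ⟨hS, h1⟩)]

lemma sgn_toggleOne (S : Finset ℕ) : sgn (toggleOne S) = -sgn S := by
  unfold sgn toggleOne
  split_ifs with h1
  · rw [← card_erase_add_one h1, pow_succ]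
    ring
  · rw [card_insert_of_notMem h1, pow_succ]
    ring

lemma finite_admissibleLists (g : ℕ) : (admissibleLists g).Finite := by
  refine (List.finite_length_le_forall_mem (range (g + 1)).powerset.finite_toSet g).subset ?_
  rintro l ⟨hadm, hsum⟩
  refine ⟨?_, fun S hS => ?_⟩
  · calc l.length = (l.map genus).length := (List.length_map _).symm
      _ ≤ (l.map genus).sum := List.length_le_sum_of_one_le _ (by simp [genus])
      _ = g := hsum
  · have hgenus : genus S ≤ g := hsum ▸ List.le_sum_of_mem (List.mem_map_of_mem hS)
    rw [coe_powerset, Set.mem_preimage, Set.mem_powerset_iff, coe_subset]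
    intro m hm
    have := le_sup (f := id) hm
    simp only [genus, id, mem_range] at *
    omega

lemma modifyFirstNe_mem_admissibleLists {g : ℕ} {l : List (Finset ℕ)}
    (hl : l ∈ admissibleLists g) :
    modifyFirstNe {1} toggleOne l ∈ admissibleLists g := by
  obtain ⟨hadm, hsum⟩ := hl
  refine ⟨forall_mem_modifyFirstNe (fun S hS h1 => (admissible_toggleOne hS h1).1) hadm, ?_⟩
  rw [map_modifyFirstNe genus fun S hS h1 => genus_toggleOne (hadm S hS) h1, hsum]

lemma replicate_one_mem_admissibleLists_iff {g n : ℕ} :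
    List.replicate n {1} ∈ admissibleLists g ↔ 3 * n = g := by
  simp [admissibleLists, Admissible, genus, mul_comm]

lemma exists_ne_one_of_mem_admissibleLists {g : ℕ} {l : List (Finset ℕ)}
    (hl : l ∈ admissibleLists g) (hne : l ≠ List.replicate (g / 3) {1}) :
    ∃ S ∈ l, S ≠ {1} := by
  by_contra! h
  rw [List.eq_replicate_of_mem h, replicate_one_mem_admissibleLists_iff] at hl
  exact hne (List.eq_replicate_iff.mpr ⟨by omega, h⟩)

lemma sum_prod_sgn_filter_ne_replicate_eq_zero (g : ℕ) :
    ∑ l ∈ (finite_admissibleLists g).toFinset with l ≠ List.replicate (g / 3) {1},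
      (l.map sgn).prod = 0 := by
  set σ := modifyFirstNe {1} toggleOne
  have hσσ : ∀ l ∈ admissibleLists g, σ (σ l) = l := fun l hl =>
    modifyFirstNe_modifyFirstNe toggleOne_involutive fun S hS h1 =>
      (admissible_toggleOne (hl.1 S hS) h1).2
  have hsgn : ∀ l ∈ admissibleLists g, l ≠ List.replicate (g / 3) {1} →
      ((σ l).map sgn).prod = -(l.map sgn).prod := fun l hl hne =>
    prod_map_modifyFirstNe sgn_toggleOne (exists_ne_one_of_mem_admissibleLists hl hne)
  refine sum_involution (fun l _ => σ l) ?_ ?_ ?_ ?_ <;>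
    simp only [mem_filter, Set.Finite.mem_toFinset]
  · rintro l ⟨hl, hne⟩
    rw [hsgn l hl hne, add_neg_cancel]
  · rintro l ⟨hl, hne⟩ hprod hfix
    have := hsgn l hl hne
    rw [hfix] at this
    exact hprod (by linarith)
  · rintro l ⟨hl, hne⟩
    refine ⟨modifyFirstNe_mem_admissibleLists hl, fun heq => hne ?_⟩
    rw [← hσσ l hl, heq]
    exact modifyFirstNe_replicate _
  · rintro l ⟨hl, -⟩
    exact hσσ l hl

/-- For a nonempty finite set `S` of positive integers, with genus `γ(S) = 2·max(S) + 1` and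
sign `ε(S) = (−1)^{|S|+1}`, the sum over all finite sequences `(S₁, …, S_r)` of nonempty
finite sets of positive integers with `γ(S₁) + ⋯ + γ(S_r) = g` of `ε(S₁)⋯ε(S_r)` equals `1`
if `3 ∣ g` and `0` otherwise. -/
theorem euler_characteristic_of_tensor_algebra (g : ℕ) :
    (∑ᶠ l ∈ {l : List (Finset ℕ) |
        (∀ S ∈ l, S.Nonempty ∧ ∀ m ∈ S, 0 < m) ∧
        (l.map fun S => 2 * S.sup id + 1).sum = g},
      (l.map fun S : Finset ℕ => (-1 : ℤ) ^ (S.card + 1)).prod) =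
      if 3 ∣ g then 1 else 0 := by
  have hfin := finite_admissibleLists g
  have hrep : List.replicate (g / 3) {1} ∈ hfin.toFinset ↔ 3 ∣ g := by
    rw [Set.Finite.mem_toFinset, replicate_one_mem_admissibleLists_iff, Nat.mul_div_eq_iff_dvd]
  change ∑ᶠ l ∈ admissibleLists g, (l.map sgn).prod = _
  rw [finsum_mem_eq_finite_toFinset_sum _ hfin,
    ← sum_filter_add_sum_filter_not _ (· = List.replicate (g / 3) {1}), filter_eq',
    sum_prod_sgn_filter_ne_replicate_eq_zero, add_zero]
  simp only [hrep]
  split_ifs <;> simp [sgn]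
end

section
/- Let n ≥ 1 be an integer with n ≢ 1 (mod 4), let g ≥ 1, let X be a positive definite symmetric real g×g matrix, and let A₁, …, A_n be symmetric real g×g matrices. Then the alternating trace vanishes: Σ_{σ ∈ S_n} sgn(σ) · tr(X⁻¹A_{σ(1)} X⁻¹A_{σ(2)} ⋯ X⁻¹A_{σ(n)}) = 0. -/
/-!
Write the alternating sum as `∑ σ, sgn σ • Φ (σ 0, …, σ (n-1))`, where `Φ` is the trace of the
product of the matrices `X⁻¹ A_i` along a word of indices. If `Φ` is invariant under precomposing
the word with an odd permutation `τ`, reindexing by `σ ↦ σ τ` shows that the sum equals its own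
negative. The trace is invariant under cyclic rotation of the word, and since `X⁻¹` and the `A_i`
are symmetric, transposing shows that it is invariant under reversal of the word as well. The
rotation of `n` letters is odd for even `n`, and the reversal, of sign `(-1) ^ (n (n - 1) / 2)`, is
odd for `n ≡ 2, 3 (mod 4)`.
-/

open Equiv Matrix

theorem List.mul_prod_map_mul_eq_prod_map_mul_mul {ι M : Type*} [Monoid M] (a : M) (f : ι → M)
    (l : List ι) : a * (l.map fun i => f i * a).prod = (l.map fun i => a * f i).prod * a := by
  induction l with
  | nil => simp
  | cons i l ih => simp only [List.map_cons, List.prod_cons, mul_assoc, ih]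

theorem List.ofFn_comp_finRotate {α : Type*} {n : ℕ} (f : Fin n → α) :
    List.ofFn (f ∘ finRotate n) = (List.ofFn f).rotate 1 := by
  cases n with
  | zero => rfl
  | succ m =>
    rw [List.ofFn_succ', List.ofFn_succ, List.rotate_cons_succ, List.rotate_zero,
      List.concat_eq_append]
    simp [Fin.coeSucc_eq_succ]

theorem List.ofFn_comp_rev {α : Type*} {n : ℕ} (f : Fin n → α) :
    List.ofFn (f ∘ Fin.rev) = (List.ofFn f).reverse := by
  rw [List.ofFn_eq_map, List.ofFn_eq_map, ← List.map_reverse, List.finRange_reverse, List.map_map]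

theorem Fin.sign_revPerm (n : ℕ) :
    Perm.sign (Fin.revPerm : Perm (Fin n)) = (-1) ^ (n * (n - 1) / 2) := by
  have hinv (j i : Fin n) (hi : i ∈ Finset.Iio j) :
      (if revPerm i < revPerm j then 1 else -1 : ℤˣ) = -1 :=
    if_neg (by simpa using (Finset.mem_Iio.mp hi).le)
  rw [Perm.sign_eq_prod_prod_Iio, Finset.prod_congr rfl fun j _ => Finset.prod_congr rfl (hinv j)]
  simp only [Finset.prod_const, Fin.card_Iio, Finset.prod_pow_eq_pow_sum,
    Fin.sum_univ_eq_sum_range (fun i => i) n, Finset.sum_range_id]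

theorem Nat.odd_mul_sub_one_div_two {n : ℕ} (hn : 2 ≤ n % 4) : Odd (n * (n - 1) / 2) := by
  have h2 : n * (n - 1) / 2 * 2 = n * (n - 1) :=
    Nat.div_mul_cancel (Nat.even_mul_pred_self n).two_dvd
  have h4 : n * (n - 1) % 4 = 2 := by
    rw [Nat.mul_mod]
    rcases (by omega : n % 4 = 2 ∨ n % 4 = 3) with h | h <;>
      rw [h, (by omega : (n - 1) % 4 = n % 4 - 1), h]
  rw [Nat.odd_iff]
  omega

theorem Equiv.Perm.sum_sign_smul_eq_zero_of_mul_right_invariant {α M : Type*} [Fintype α]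
    [DecidableEq α] [AddCommGroup M] [IsAddTorsionFree M] {F : Perm α → M} {τ : Perm α}
    (hτ : sign τ = -1) (hF : ∀ σ, F (σ * τ) = F σ) : ∑ σ, sign σ • F σ = 0 := by
  refine self_eq_neg.mp ?_
  calc ∑ σ, sign σ • F σ = ∑ σ, sign (σ * τ) • F (σ * τ) :=
        (Equiv.sum_comp (Equiv.mulRight τ) _).symm
    _ = -∑ σ, sign σ • F σ := by simp [hF, hτ, Finset.sum_neg_distrib]

namespace Equiv.Perm

variable {M : Type*} [AddCommGroup M] [IsAddTorsionFree M] {n : ℕ} {Φ : List (Fin n) → M}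

theorem sum_sign_smul_ofFn_eq_zero_of_rotate (hn : Even n) (hn0 : n ≠ 0)
    (hΦ : ∀ l, Φ (l.rotate 1) = Φ l) : ∑ σ : Perm (Fin n), sign σ • Φ (List.ofFn σ) = 0 := by
  refine sum_sign_smul_eq_zero_of_mul_right_invariant (τ := finRotate n) ?_ fun σ => ?_
  · obtain ⟨m, rfl⟩ := Nat.exists_eq_succ_of_ne_zero hn0
    rw [sign_finRotate]
    exact (Nat.not_even_iff_odd.mp (Nat.even_add_one.mp hn)).neg_one_pow
  · rw [coe_mul, List.ofFn_comp_finRotate, hΦ]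

theorem sum_sign_smul_ofFn_eq_zero_of_reverse (hn : 2 ≤ n % 4)
    (hΦ : ∀ l, Φ l.reverse = Φ l) : ∑ σ : Perm (Fin n), sign σ • Φ (List.ofFn σ) = 0 := by
  refine sum_sign_smul_eq_zero_of_mul_right_invariant (τ := Fin.revPerm) ?_ fun σ => ?_
  · rw [Fin.sign_revPerm]
    exact (Nat.odd_mul_sub_one_div_two hn).neg_one_pow
  · rw [coe_mul, show ⇑(Fin.revPerm : Perm (Fin n)) = Fin.rev from rfl, List.ofFn_comp_rev, hΦ]

end Equiv.Perm

namespace Matrix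

variable {m R ι : Type*} [Fintype m] [DecidableEq m] [CommSemiring R]

theorem trace_list_prod_rotate (l : List (Matrix m m R)) (k : ℕ) :
    trace (l.rotate k).prod = trace l.prod := by
  rw [List.rotate_eq_drop_append_take_mod, List.prod_append, trace_mul_comm, ← List.prod_append,
    List.take_append_drop]

theorem trace_list_prod_map_mul_comm (Y : Matrix m m R) (f : ι → Matrix m m R) (l : List ι) :
    trace (l.map fun i => f i * Y).prod = trace (l.map fun i => Y * f i).prod := by
  cases l with
  | nil => rfl
  | cons i l =>
    simp only [List.map_cons, List.prod_cons]
    rw [mul_assoc, List.mul_prod_map_mul_eq_prod_map_mul_mul, ← mul_assoc, trace_mul_cycle]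

theorem trace_list_prod_reverse_map_mul {Y : Matrix m m R} (hY : Y.IsSymm) {B : ι → Matrix m m R}
    (hB : ∀ i, (B i).IsSymm) (l : List ι) :
    trace (l.reverse.map fun i => Y * B i).prod = trace (l.map fun i => Y * B i).prod := by
  rw [← trace_transpose, transpose_list_prod, List.map_reverse, List.map_reverse,
    List.reverse_reverse, List.map_map]
  simp only [Function.comp_def, transpose_mul, hY.eq, (hB _).eq]
  exact trace_list_prod_map_mul_comm Y B l

end Matrix

theorem alternating_trace_vanishes_of_ne_one_mod_four_general
    (n : ℕ) (hn : 1 ≤ n) (hmod : n % 4 ≠ 1)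
    (g : ℕ)
    (X : Matrix (Fin g) (Fin g) ℝ) (hX : X.PosDef)
    (A : Fin n → Matrix (Fin g) (Fin g) ℝ) (hA : ∀ i, (A i).IsSymm) :
    ∑ σ : Equiv.Perm (Fin n),
      ((Equiv.Perm.sign σ : ℤ) : ℝ) *
        Matrix.trace (((List.finRange n).map fun i => X⁻¹ * A (σ i)).prod) = 0 := by
  have hXinv : X⁻¹.IsSymm := IsSymm.inv hX.1
  let Φ : List (Fin n) → ℝ := fun l => trace (l.map fun i => X⁻¹ * A i).prod
  suffices ∑ σ : Perm (Fin n), σ.sign • Φ (List.ofFn σ) = 0 by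
    simpa [Φ, Units.smul_def, List.ofFn_eq_map, List.map_map, Function.comp_def] using this
  by_cases h : 2 ≤ n % 4
  · exact Perm.sum_sign_smul_ofFn_eq_zero_of_reverse h fun l =>
      trace_list_prod_reverse_map_mul hXinv hA l
  · refine Perm.sum_sign_smul_ofFn_eq_zero_of_rotate (Nat.even_iff.mpr (by omega)) (by omega)
      fun l => ?_
    simp only [Φ, List.map_rotate, trace_list_prod_rotate]

/-- For `n ≢ 1 (mod 4)`, the alternating trace
`Σ_{σ ∈ S_n} sgn(σ) · tr(X⁻¹A_{σ(1)} ⋯ X⁻¹A_{σ(n)})` vanishes, for `X` a positive definite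
symmetric real `g × g` matrix and `A₁, …, A_n` symmetric real `g × g` matrices.
This is the vanishing of the invariant form `ωⁿ = tr((X⁻¹dX)ⁿ)` unless `n ≡ 1 (mod 4)`. -/
theorem alternating_trace_vanishes_of_ne_one_mod_four
    (n : ℕ) (hn : 1 ≤ n) (hmod : n % 4 ≠ 1)
    (g : ℕ) (hg : 1 ≤ g)
    (X : Matrix (Fin g) (Fin g) ℝ) (hX : X.PosDef)
    (A : Fin n → Matrix (Fin g) (Fin g) ℝ) (hA : ∀ i, (A i).IsSymm) :
    ∑ σ : Equiv.Perm (Fin n),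
      ((Equiv.Perm.sign σ : ℤ) : ℝ) *
        Matrix.trace (((List.finRange n).map fun i => X⁻¹ * A (σ i)).prod) = 0 :=
  alternating_trace_vanishes_of_ne_one_mod_four_general n hn hmod g X hX A hA
end
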